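/- arXiv:2106.12726 — 2 statements merged into one kernel-verified Lean document; each statement's English description precedes it below -/
import Mathlib

section
/- Let K be a field and r ≥ 1. The standard polynomial St_{2r+1} of degree 2r+1 is a polynomial identity of UT_r(K) but is not a polynomial identity of UT_{r+1}(K). -/
/-- Evaluation of the standard polynomial `St_m = ∑ σ, sgn(σ) x_{σ(1)} ⋯ x_{σ(m)}`
at the tuple `a` of elements of the `K`-algebra `A`. -/
noncomputable def stdEval {K A : Type*} [Field K] [Ring A] [Algebra K A]
    (m : ℕ) (a : Fin m → A) : A :=
  ∑ σ : Equiv.Perm (Fin m), ((Equiv.Perm.sign σ : ℤ) : K) • (List.ofFn fun i => a (σ i)).prod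

/-- `M` is an upper triangular matrix, i.e. an element of `UT_n(K)`. -/
def IsUT {K : Type*} [Field K] {n : ℕ} (M : Matrix (Fin n) (Fin n) K) : Prop :=
  ∀ i j : Fin n, (j : ℕ) < (i : ℕ) → M i j = 0

/-!
Write each upper triangular `a l` as `u l + d l` with `u l` strictly upper triangular and `d l`
diagonal, and expand `St_m` multilinearly. A term with at least `r` strictly upper triangular
arguments vanishes, since each of them pushes the support of a product one step further above
the diagonal. A term with fewer has more than `m - r ≥ r` diagonal arguments, which are linearly
dependent in the `r`-dimensional space of diagonal matrices, so the alternating map `St_m` kills it.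

On `UT_{r+1}` the matrix units `e₀₀, e₀₁, e₁₁, e₁₂, …, e_rr` multiply to `e₀ᵣ` in the given order
and to `0` in every other order, so `St_{2r+1}` takes the value `e₀ᵣ` on them.
-/

open Matrix Module

section Band

variable {R : Type*} [Semiring R] {n : ℕ}

def IsUTBand (k : ℕ) (M : Matrix (Fin n) (Fin n) R) : Prop :=
  ∀ i j : Fin n, (j : ℕ) < i + k → M i j = 0

lemma isUTBand_one : IsUTBand 0 (1 : Matrix (Fin n) (Fin n) R) := fun i j hij =>
  one_apply_ne fun h => by subst h; omega

lemma isUTBand_diagonal (d : Fin n → R) : IsUTBand 0 (diagonal d) := fun i j hij =>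
  diagonal_apply_ne _ fun h => by subst h; omega

lemma IsUTBand.mul {k l : ℕ} {M N : Matrix (Fin n) (Fin n) R} (hM : IsUTBand k M)
    (hN : IsUTBand l N) : IsUTBand (k + l) (M * N) := fun i j hij =>
  (mul_apply ..).trans <| Finset.sum_eq_zero fun t _ => by
    by_cases h : (t : ℕ) < i + k
    · rw [hM i t h, zero_mul]
    · rw [hN t j (by omega), mul_zero]

lemma isUTBand_list_prod_ofFn : ∀ {m : ℕ} {v : Fin m → Matrix (Fin n) (Fin n) R}
    {w : Fin m → ℕ}, (∀ i, IsUTBand (w i) (v i)) → IsUTBand (∑ i, w i) (List.ofFn v).prod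
  | 0, _, _, _ => by simpa using isUTBand_one
  | _ + 1, _, _, h => by
    rw [List.ofFn_succ, List.prod_cons, Fin.sum_univ_succ]
    exact (h 0).mul (isUTBand_list_prod_ofFn fun i => h i.succ)

lemma IsUTBand.eq_zero {k : ℕ} {M : Matrix (Fin n) (Fin n) R} (hM : IsUTBand k M)
    (hk : n ≤ k) : M = 0 := by
  ext i j
  exact hM i j (by omega)

end Band

lemma IsUTBand.sub_diagonal_diag {R : Type*} [Ring R] {n : ℕ} {M : Matrix (Fin n) (Fin n) R}
    (hM : IsUTBand 0 M) : IsUTBand 1 (M - diagonal M.diag) := by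
  intro i j hij
  rcases (Nat.lt_succ_iff.1 hij).lt_or_eq with h | h
  · rw [Matrix.sub_apply, hM i j h, diagonal_apply_ne _ fun e => by subst e; omega, sub_zero]
  · obtain rfl : i = j := Fin.ext h.symm
    simp

lemma stdEval_eq_alternatization {K A : Type*} [Field K] [Ring A] [Algebra K A] (m : ℕ)
    (a : Fin m → A) :
    stdEval (K := K) m a = (MultilinearMap.mkPiAlgebraFin K m A).alternatization a := by
  rw [MultilinearMap.alternatization_apply, stdEval]
  refine Finset.sum_congr rfl fun σ _ => ?_
  rw [MultilinearMap.domDomCongr_apply, MultilinearMap.mkPiAlgebraFin_apply,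
    Int.cast_smul_eq_zsmul, Units.smul_def]

lemma stdEval_eq_zero_of_isUTBand {K : Type*} [Field K] {m n : ℕ}
    {a : Fin m → Matrix (Fin n) (Fin n) K} {w : Fin m → ℕ} (ha : ∀ l, IsUTBand (w l) (a l))
    (hw : n ≤ ∑ l, w l) : stdEval (K := K) m a = 0 := by
  refine Finset.sum_eq_zero fun σ _ => ?_
  have hprod := isUTBand_list_prod_ofFn fun i => ha (σ i)
  rw [Equiv.sum_comp σ w] at hprod
  rw [hprod.eq_zero hw, smul_zero]

lemma AlternatingMap.map_eq_zero_of_finrank_lt {K M N ι : Type*} [Field K] [AddCommGroup M]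
    [Module K M] [AddCommGroup N] [Module K N]
    (f : M [⋀^ι]→ₗ[K] N) (v : ι → M) (S : Submodule K M) [FiniteDimensional K S] (s : Finset ι)
    (hS : ∀ i ∈ s, v i ∈ S) (hs : finrank K S < s.card) : f v = 0 := by
  refine f.map_linearDependent v fun hv => hs.not_ge ?_
  have hvs := hv.comp ((↑) : s → ι) Subtype.val_injective
  rw [← Fintype.card_coe, ← finrank_span_eq_card hvs]
  refine Submodule.finrank_mono (Submodule.span_le.2 ?_)
  rintro _ ⟨i, rfl⟩
  exact hS i i.2

theorem stdEval_eq_zero_of_isUT {K : Type*} [Field K] {m r : ℕ} (hm : 2 * r ≤ m)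
    (a : Fin m → Matrix (Fin r) (Fin r) K) (ha : ∀ l, IsUT (a l)) :
    stdEval (K := K) m a = 0 := by
  classical
  set d : Fin m → Matrix (Fin r) (Fin r) K := fun l => diagonal (a l).diag
  set u : Fin m → Matrix (Fin r) (Fin r) K := fun l => a l - d l
  have hsplit : a = u + d := by ext; simp [u]
  rw [stdEval_eq_alternatization, hsplit, ← AlternatingMap.coe_multilinearMap,
    MultilinearMap.map_add_univ]
  refine Finset.sum_eq_zero fun s _ => ?_
  by_cases hs : r ≤ s.card
  · refine (stdEval_eq_alternatization _ _).symm.trans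
      (stdEval_eq_zero_of_isUTBand (w := fun l => if l ∈ s then 1 else 0) (fun l => ?_) ?_)
    · by_cases hl : l ∈ s
      · simpa [hl] using IsUTBand.sub_diagonal_diag fun i j h => ha l i j h
      · simpa [hl] using isUTBand_diagonal (a l).diag
    · simpa using hs
  · refine AlternatingMap.map_eq_zero_of_finrank_lt _ _
      (LinearMap.range (diagonalLinearMap (Fin r) K K)) sᶜ (fun l hl => ?_) ?_
    · rw [Finset.piecewise_eq_of_notMem _ _ _ (Finset.mem_compl.1 hl)]
      exact ⟨_, rfl⟩
    · have := LinearMap.finrank_range_le (diagonalLinearMap (Fin r) K K)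
      rw [finrank_fin_fun] at this
      rw [Finset.card_compl, Fintype.card_fin]
      omega

lemma list_prod_ofFn_single_one {n R : Type*} [DecidableEq n] [Fintype n] [Semiring R] :
    ∀ {m : ℕ} (p q : Fin (m + 1) → n),
      (List.ofFn fun i => single (p i) (q i) (1 : R)).prod =
        if ∀ i : Fin m, q i.castSucc = p i.succ then single (p 0) (q (Fin.last m)) 1 else 0
  | 0, _, _ => by simp
  | m + 1, p, q => by
    rw [List.ofFn_succ, List.prod_cons,
      list_prod_ofFn_single_one (fun i => p i.succ) (fun i => q i.succ)]
    simp only [Fin.forall_fin_succ (n := m), Fin.succ_last, ← Fin.castSucc_succ]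
    by_cases h0 : q 0 = p 1
    · split_ifs <;> simp_all
    · simp [h0]

section Staircase

variable (r : ℕ)

def stairRow (l : Fin (2 * r + 1)) : Fin (r + 1) := ⟨l / 2, by omega⟩

def stairCol (l : Fin (2 * r + 1)) : Fin (r + 1) := ⟨(l + 1) / 2, by omega⟩

def staircase (K : Type*) [Field K] (l : Fin (2 * r + 1)) : Matrix (Fin (r + 1)) (Fin (r + 1)) K :=
  single (stairRow r l) (stairCol r l) 1

variable {r}

lemma isUT_staircase {K : Type*} [Field K] (l : Fin (2 * r + 1)) : IsUT (staircase r K l) :=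
  fun i j hij => single_apply_of_ne _ _ _ _ _ <| by
    rintro ⟨rfl, rfl⟩
    simp only [stairRow, stairCol] at hij
    omega

lemma eq_one_of_stairCol_eq_stairRow {σ : Equiv.Perm (Fin (2 * r + 1))}
    (h : ∀ i : Fin (2 * r), stairCol r (σ i.castSucc) = stairRow r (σ i.succ)) : σ = 1 := by
  have hmono : StrictMono σ := Fin.strictMono_iff_lt_succ.2 fun i => by
    have hi := Fin.val_eq_of_eq (h i)
    have hne := Fin.val_injective.ne (σ.injective.ne (Fin.castSucc_lt_succ (i := i)).ne)
    simp only [stairRow, stairCol] at hi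
    rw [Fin.lt_def]
    omega
  exact Equiv.ext fun i => hmono.apply_eq

lemma stdEval_staircase (K : Type*) [Field K] :
    stdEval (K := K) (2 * r + 1) (staircase r K) = single 0 (Fin.last r) 1 := by
  have hprod (σ : Equiv.Perm (Fin (2 * r + 1))) :
      (List.ofFn fun i => staircase r K (σ i)).prod =
        if σ = 1 then single (stairRow r (σ 0)) (stairCol r (σ (Fin.last _))) 1 else 0 := by
    simp only [staircase]
    rw [list_prod_ofFn_single_one]
    by_cases hσ : σ = 1
    · subst hσ
      simp [stairRow, stairCol]
    · rw [if_neg hσ, if_neg (mt eq_one_of_stairCol_eq_stairRow hσ)]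
  rw [stdEval, Finset.sum_eq_single 1 (fun σ _ hσ => by rw [hprod, if_neg hσ, smul_zero])
    (by simp), hprod, if_pos rfl, Equiv.Perm.sign_one, Units.val_one, Int.cast_one, one_smul]
  congr 1 <;> ext <;> simp [stairRow, stairCol]
  omega

end Staircase

theorem standard_poly_odd_identity_UT_general {K : Type*} [Field K] (r : ℕ) :
    (∀ a : Fin (2 * r + 1) → Matrix (Fin r) (Fin r) K,
        (∀ l, IsUT (a l)) → stdEval (K := K) (2 * r + 1) a = 0) ∧
      ¬ ∀ a : Fin (2 * r + 1) → Matrix (Fin (r + 1)) (Fin (r + 1)) K,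
          (∀ l, IsUT (a l)) → stdEval (K := K) (2 * r + 1) a = 0 := by
  refine ⟨fun a ha => stdEval_eq_zero_of_isUT (by omega) a ha, fun h => ?_⟩
  have hzero := h (staircase r K) isUT_staircase
  rw [stdEval_staircase] at hzero
  simpa using congrFun (congrFun hzero 0) (Fin.last r)

/-- The standard polynomial `St_{2r+1}` is a polynomial identity of `UT_r(K)` but not of
`UT_{r+1}(K)`. -/
theorem standard_poly_odd_identity_UT {K : Type*} [Field K] (r : ℕ) (hr : 1 ≤ r) :
    (∀ a : Fin (2 * r + 1) → Matrix (Fin r) (Fin r) K,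
        (∀ l, IsUT (a l)) → stdEval (K := K) (2 * r + 1) a = 0) ∧
      ¬ ∀ a : Fin (2 * r + 1) → Matrix (Fin (r + 1)) (Fin (r + 1)) K,
          (∀ l, IsUT (a l)) → stdEval (K := K) (2 * r + 1) a = 0 :=
  standard_poly_odd_identity_UT_general r
end

section
/- Let K be an infinite field, let A be a K-algebra, let f ∈ K⟨X⟩ be a polynomial, and let V be the K-linear span of the image of f on A. Then the set I = {g ∈ K⟨X⟩ : every evaluation of g at elements of A lies in V} is a T-Lie ideal of K⟨X⟩: it is a K-linear subspace, for every g ∈ I and every h ∈ K⟨X⟩ the commutator [h, g] = hg − gh lies in I, and φ(g) ∈ I for every g ∈ I and every K-algebra endomorphism φ of K⟨X⟩. -/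
/-! The span `V` of the image of `f` is closed under `[b, ·]` for every `b ∈ A`. Indeed, for a
value `f(a)` the polynomial `p(t) = f(a + t [b, a])` with coefficients in `A` takes all its values
at scalars `t ∈ K` in `V`; as `K` is infinite, a Vandermonde argument puts every coefficient of `p`
in `V`, and its linear coefficient is `[b, f(a)]`. Invariance under endomorphisms `φ` holds because
evaluating `φ g` at `a` is evaluating `g` at `(φ xᵢ)(a)`. -/

open Polynomial

section InfiniteField

variable {K M : Type*} [Field K] [Infinite K] [AddCommGroup M] [Module K M]

theorem eq_zero_of_forall_sum_pow_smul_eq_zero (s : Finset ℕ) (u : ℕ → M)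
    (h : ∀ t : K, ∑ j ∈ s, t ^ j • u j = 0) {k : ℕ} (hk : k ∈ s) : u k = 0 := by
  rw [← Module.forall_dual_apply_eq_zero_iff K]
  intro φ
  set p : K[X] := ∑ j ∈ s, monomial j (φ (u j))
  have hp : p = 0 := by
    refine p.eq_zero_of_infinite_isRoot (Set.infinite_univ.mono fun t _ => ?_)
    simpa [p, eval_finsetSum, mul_comm] using congrArg φ (h t)
  simpa [p, finsetSum_coeff, coeff_monomial, hk] using congrArg (coeff · k) hp

theorem Submodule.mem_of_forall_sum_pow_smul_mem (V : Submodule K M) (s : Finset ℕ) (u : ℕ → M)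
    (h : ∀ t : K, ∑ j ∈ s, t ^ j • u j ∈ V) {k : ℕ} (hk : k ∈ s) : u k ∈ V := by
  rw [← Submodule.Quotient.mk_eq_zero]
  refine eq_zero_of_forall_sum_pow_smul_eq_zero (K := K) s (fun j => V.mkQ (u j)) (fun t => ?_) hk
  simp_rw [← map_smul, ← map_sum]
  exact (Submodule.Quotient.mk_eq_zero V).mpr (h t)

theorem Polynomial.coeff_mem_of_forall_eval_algebraMap_mem {A : Type*} [Ring A] [Algebra K A]
    (V : Submodule K A) (p : A[X]) (h : ∀ t : K, p.eval (algebraMap K A t) ∈ V) (k : ℕ) :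
    p.coeff k ∈ V := by
  by_cases hk : k ∈ p.support
  · refine V.mem_of_forall_sum_pow_smul_mem p.support p.coeff (fun t => ?_) hk
    convert h t using 1
    rw [eval_eq_sum, Polynomial.sum_def]
    refine Finset.sum_congr rfl fun j _ => ?_
    rw [Algebra.smul_def, Algebra.commutes, map_pow]
  · rw [notMem_support_iff.mp hk]
    exact V.zero_mem

end InfiniteField

namespace FreeAlgebra

variable {R A σ : Type*} [CommSemiring R]

/-- Evaluation along the line `t ↦ a + t • d`, as a polynomial in `t`. -/
noncomputable def liftLine [Semiring A] [Algebra R A] (a d : σ → A) :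
    FreeAlgebra R σ →ₐ[R] A[X] :=
  lift R fun i => C (a i) + C (d i) * X

theorem eval_liftLine [Semiring A] [Algebra R A] (a d : σ → A) (t : R) (g : FreeAlgebra R σ) :
    (liftLine a d g).eval (algebraMap R A t) = lift R (a + t • d) g := by
  let evalAt : A[X] →ₐ[R] A :=
    eval₂AlgHom (AlgHom.id R A) (algebraMap R A t) fun _ => Algebra.commute_algebraMap_right t _
  have : evalAt.comp (liftLine a d) = lift R (a + t • d) := by
    ext i
    simp [evalAt, liftLine, Algebra.smul_def, Algebra.commutes t]
  exact congrArg (· g) this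

theorem coeff_zero_liftLine [Semiring A] [Algebra R A] (a d : σ → A) (g : FreeAlgebra R σ) :
    (liftLine a d g).coeff 0 = lift R a g := by
  induction g using FreeAlgebra.induction with
  | grade0 r => simp [Polynomial.algebraMap_apply, coeff_C]
  | grade1 i => simp [liftLine]
  | mul x y hx hy => rw [map_mul, map_mul, mul_coeff_zero, hx, hy]
  | add x y hx hy => rw [map_add, map_add, coeff_add, hx, hy]

theorem coeff_one_liftLine_commutator [Ring A] [Algebra R A] (a : σ → A) (b : A)
    (g : FreeAlgebra R σ) :
    (liftLine a (fun i => b * a i - a i * b) g).coeff 1 = b * lift R a g - lift R a g * b := by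
  induction g using FreeAlgebra.induction with
  | grade0 r => simp [Polynomial.algebraMap_apply, Algebra.commutes]
  | grade1 i => simp [liftLine]
  | mul x y hx hy =>
    rw [map_mul, map_mul, mul_coeff_one, hx, hy, coeff_zero_liftLine, coeff_zero_liftLine]
    noncomm_ring
  | add x y hx hy =>
    rw [map_add, map_add, coeff_add, hx, hy]
    noncomm_ring

end FreeAlgebra

theorem commutator_mem_span_range_lift {K A σ : Type*} [Field K] [Infinite K] [Ring A]
    [Algebra K A] (f : FreeAlgebra K σ) (b : A) {v : A}
    (hv : v ∈ Submodule.span K (Set.range fun a : σ → A => FreeAlgebra.lift K a f)) :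
    b * v - v * b ∈ Submodule.span K (Set.range fun a : σ → A => FreeAlgebra.lift K a f) := by
  set V := Submodule.span K (Set.range fun a : σ → A => FreeAlgebra.lift K a f)
  suffices V ≤ V.comap (LinearMap.mulLeft K b - LinearMap.mulRight K b) from this hv
  rw [Submodule.span_le]
  rintro _ ⟨a, rfl⟩
  rw [SetLike.mem_coe, Submodule.mem_comap, LinearMap.sub_apply, LinearMap.mulLeft_apply,
    LinearMap.mulRight_apply, ← FreeAlgebra.coeff_one_liftLine_commutator]
  refine coeff_mem_of_forall_eval_algebraMap_mem V _ (fun t => ?_) 1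
  rw [FreeAlgebra.eval_liftLine]
  exact Submodule.subset_span ⟨_, rfl⟩

/-- For an algebra `A` over an infinite field `K` and a polynomial `f ∈ K⟨X⟩`, the set of
polynomials all of whose evaluations on `A` lie in the linear span `V` of the image of `f`
is a T-Lie ideal of `K⟨X⟩`: a linear subspace, closed under commutators with arbitrary
elements of `K⟨X⟩`, and invariant under all `K`-algebra endomorphisms of `K⟨X⟩`. -/
theorem polynomials_with_image_in_span_is_TLie_ideal {K A : Type*} [Field K] [Infinite K]
    [Ring A] [Algebra K A] (f : FreeAlgebra K ℕ) :
    let V : Submodule K A :=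
      Submodule.span K {y : A | ∃ a : ℕ → A, FreeAlgebra.lift K a f = y}
    let I : Set (FreeAlgebra K ℕ) :=
      {g : FreeAlgebra K ℕ | ∀ a : ℕ → A, FreeAlgebra.lift K a g ∈ V}
    (0 : FreeAlgebra K ℕ) ∈ I ∧
      (∀ g₁ ∈ I, ∀ g₂ ∈ I, g₁ + g₂ ∈ I) ∧
      (∀ c : K, ∀ g ∈ I, c • g ∈ I) ∧
      (∀ g ∈ I, ∀ h : FreeAlgebra K ℕ, h * g - g * h ∈ I) ∧
      (∀ g ∈ I, ∀ φ : FreeAlgebra K ℕ →ₐ[K] FreeAlgebra K ℕ, φ g ∈ I) := by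
  intro V I
  refine ⟨fun a => ?_, fun g₁ h₁ g₂ h₂ a => ?_, fun c g hg a => ?_, fun g hg h a => ?_,
    fun g hg φ a => ?_⟩
  · rw [map_zero]
    exact V.zero_mem
  · rw [map_add]
    exact V.add_mem (h₁ a) (h₂ a)
  · rw [map_smul]
    exact V.smul_mem c (hg a)
  · rw [map_sub, map_mul, map_mul]
    exact commutator_mem_span_range_lift f _ (hg a)
  · have := hg ((FreeAlgebra.lift K).symm ((FreeAlgebra.lift K a).comp φ))
    rwa [(FreeAlgebra.lift K).apply_symm_apply] at this
end
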